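/- arXiv:2508.12926 — 4 statements merged into one kernel-verified Lean document; each statement's English description precedes it below -/
import Mathlib

section
/- Let M ≥ 0 be an integer and let c, σ_min > 0, q ≥ 2 and C ≥ 1 be reals. Let (X_i)_{i∈ℕ} be a sequence in the class D(M, q, c, σ_min, C) and for p ∈ ℕ set X := (X_1, …, X_p) ∈ ℝ^p. If p ≥ M + 2, then there exists a unique vector m ∈ ℝ^p minimizing the map m ↦ E‖X − m‖ over ℝ^p, where ‖·‖ is the Euclidean norm on ℝ^p. -/
open MeasureTheory ProbabilityTheory Filter
open scoped ENNReal

noncomputable section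

/-- `M`-dependence of a sequence of real random variables: for every `k`,
the family `(X_i)_{i ≤ k}` is independent of the family `(X_i)_{i ≥ k+M+1}`. -/
def MDependent {Ω : Type*} [MeasurableSpace Ω] (P : Measure Ω) (M : ℕ)
    (X : ℕ → Ω → ℝ) : Prop :=
  ∀ k : ℕ, IndepFun (fun ω => fun i : {i : ℕ // i ≤ k} => X i.1 ω)
    (fun ω => fun i : {i : ℕ // k + M + 1 ≤ i} => X i.1 ω) P

/-- The class `D(M, q, c, σmin, C)`: `M`-dependent sequences of absolutely continuous
real random variables with density bounded by `c`, `E|X_i|^q ≤ C`, `E|X_i - μ_i|^q ≤ C`,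
and standard deviation at least `σmin`. -/
structure MemD {Ω : Type*} [MeasurableSpace Ω] (P : Measure Ω) (M : ℕ)
    (q c σmin C : ℝ) (X : ℕ → Ω → ℝ) : Prop where
  measurable : ∀ i, Measurable (X i)
  mdep : MDependent P M X
  absCont : ∀ i, Measure.map (X i) P ≪ (volume : Measure ℝ)
  density_le : ∀ i, ∀ᵐ x ∂(volume : Measure ℝ),
      (Measure.map (X i) P).rnDeriv volume x ≤ ENNReal.ofReal c
  mom_le : ∀ i, ∫⁻ ω, ENNReal.ofReal (|X i ω| ^ q) ∂P ≤ ENNReal.ofReal C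
  cmom_le : ∀ i, ∫⁻ ω, ENNReal.ofReal (|X i ω - ∫ ω', X i ω' ∂P| ^ q) ∂P ≤ ENNReal.ofReal C
  sd_ge : ∀ i, σmin ^ 2 ≤ variance (X i) P

/-- The first `p` entries of a sequence of random variables,
as a random vector in Euclidean space (indices `0, …, p-1`). -/
def vecOf {Ω : Type*} (X : ℕ → Ω → ℝ) (p : ℕ) (ω : Ω) : EuclideanSpace ℝ (Fin p) :=
  WithLp.toLp 2 (fun i : Fin p => X i.1 ω)

/-- `m` is a geometric median of the random vector `X`:
it minimizes `E‖X - m‖` over `ℝ^p` (Euclidean norm). -/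
def IsGeometricMedian {Ω : Type*} [MeasurableSpace Ω] (P : Measure Ω) {p : ℕ}
    (X : Ω → EuclideanSpace ℝ (Fin p)) (m : EuclideanSpace ℝ (Fin p)) : Prop :=
  ∀ m' : EuclideanSpace ℝ (Fin p), ∫ ω, ‖X ω - m‖ ∂P ≤ ∫ ω, ‖X ω - m'‖ ∂P

/-!
The objective `m ↦ E‖X - m‖` is `1`-Lipschitz and coercive, so it attains its minimum. If
`m₁ ≠ m₂` were two minimizers, the midpoint would be one as well, which forces equality in the
triangle inequality almost surely; by strict convexity of the Euclidean norm, `X` then lies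
almost surely on the line through `m₁` and `m₂`. But the coordinates `X₀` and `X_{M+1}` are
independent by `M`-dependence and have atomless laws, and by Fubini the law of such a pair gives
no mass to a line.
-/

section GeometricMedian

variable {Ω E : Type*} [MeasurableSpace Ω] {P : Measure Ω} [IsProbabilityMeasure P]
  [NormedAddCommGroup E] {V : Ω → E}

lemma MeasureTheory.Integrable.norm_sub_const (hV : Integrable V P) (m : E) :
    Integrable (fun ω => ‖V ω - m‖) P :=
  (hV.sub (integrable_const m)).norm

lemma lipschitzWith_integral_norm_sub (hV : Integrable V P) :
    LipschitzWith 1 fun m => ∫ ω, ‖V ω - m‖ ∂P := by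
  refine LipschitzWith.of_le_add fun m m' => ?_
  calc ∫ ω, ‖V ω - m‖ ∂P ≤ ∫ ω, (‖V ω - m'‖ + dist m m') ∂P :=
        integral_mono (hV.norm_sub_const m)
          ((hV.norm_sub_const m').add (integrable_const _)) fun ω => by
            rw [dist_comm, dist_eq_norm]; exact norm_sub_le_norm_sub_add_norm_sub _ _ _
    _ = ∫ ω, ‖V ω - m'‖ ∂P + dist m m' := by
        rw [integral_add (hV.norm_sub_const m') (integrable_const _)]
        simp

lemma tendsto_integral_norm_sub_cocompact [ProperSpace E] (hV : Integrable V P) :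
    Tendsto (fun m => ∫ ω, ‖V ω - m‖ ∂P) (cocompact E) atTop := by
  refine tendsto_atTop_mono (fun m => ?_)
    (tendsto_atTop_add_const_right _ (-∫ ω, ‖V ω‖ ∂P) tendsto_norm_cocompact_atTop)
  have : ∫ ω, (‖m‖ - ‖V ω‖) ∂P ≤ ∫ ω, ‖V ω - m‖ ∂P :=
    integral_mono ((integrable_const _).sub hV.norm) (hV.norm_sub_const m)
      fun ω => by rw [norm_sub_rev]; exact norm_sub_norm_le _ _
  rwa [integral_sub (integrable_const _) hV.norm, integral_const, probReal_univ, one_smul,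
    sub_eq_add_neg] at this

lemma exists_forall_integral_norm_sub_le [ProperSpace E] (hV : Integrable V P) :
    ∃ m, ∀ m', ∫ ω, ‖V ω - m‖ ∂P ≤ ∫ ω, ‖V ω - m'‖ ∂P :=
  (lipschitzWith_integral_norm_sub hV).continuous.exists_forall_le
    (tendsto_integral_norm_sub_cocompact hV)

variable [NormedSpace ℝ E]

lemma ae_sameRay_sub_of_forall_integral_norm_sub_le [StrictConvexSpace ℝ E]
    (hV : Integrable V P) {m₁ m₂ : E}
    (h₁ : ∀ m, ∫ ω, ‖V ω - m₁‖ ∂P ≤ ∫ ω, ‖V ω - m‖ ∂P)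
    (h₂ : ∀ m, ∫ ω, ‖V ω - m₂‖ ∂P ≤ ∫ ω, ‖V ω - m‖ ∂P) :
    ∀ᵐ ω ∂P, SameRay ℝ (V ω - m₁) (V ω - m₂) := by
  set m := midpoint ℝ m₁ m₂
  set gap : Ω → ℝ := fun ω => ‖V ω - m₁‖ + ‖V ω - m₂‖ - 2 * ‖V ω - m‖
  have hsum : ∀ ω, (V ω - m₁) + (V ω - m₂) = (2 : ℝ) • (V ω - m) := fun ω => by
    rw [two_smul, sub_add_sub_comm, sub_add_sub_comm, midpoint_add_self]
  have hgap_nonneg : 0 ≤ gap := fun ω => by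
    have := norm_add_le (V ω - m₁) (V ω - m₂)
    rw [hsum, norm_smul, Real.norm_two] at this
    exact sub_nonneg.2 this
  have hint₁₂ : Integrable (fun ω => ‖V ω - m₁‖ + ‖V ω - m₂‖) P :=
    (hV.norm_sub_const m₁).add (hV.norm_sub_const m₂)
  have hint : Integrable (fun ω => 2 * ‖V ω - m‖) P := (hV.norm_sub_const m).const_mul 2
  have hgap_zero : ∫ ω, gap ω ∂P = 0 := by
    refine le_antisymm ?_ (integral_nonneg hgap_nonneg)
    rw [integral_sub hint₁₂ hint, integral_add (hV.norm_sub_const m₁)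
      (hV.norm_sub_const m₂), integral_const_mul]
    linarith [h₁ m, h₂ m]
  filter_upwards [(integral_eq_zero_iff_of_nonneg hgap_nonneg (hint₁₂.sub hint)).1 hgap_zero]
    with ω hω
  refine sameRay_iff_norm_add.2 ?_
  have hω : gap ω = 0 := hω
  rw [hsum, norm_smul, Real.norm_two]
  linarith

end GeometricMedian

lemma mem_affineSpan_pair_of_sameRay_sub {E : Type*} [AddCommGroup E] [Module ℝ E]
    {v m₁ m₂ : E} (hne : m₁ ≠ m₂) (h : SameRay ℝ (v - m₁) (v - m₂)) :
    v ∈ line[ℝ, m₁, m₂] := by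
  obtain ⟨u, a, b, -, -, -, hu₁, hu₂⟩ := h.exists_eq_smul
  have hdiff : (b - a) • u = m₁ - m₂ := by
    rw [sub_smul, ← hu₁, ← hu₂]; abel
  have hba : b - a ≠ 0 := by
    rintro hba
    rw [hba, zero_smul] at hdiff
    exact hne (sub_eq_zero.1 hdiff.symm)
  convert smul_vsub_rev_vadd_mem_affineSpan_pair (b / (b - a)) m₁ m₂ using 1
  rw [vsub_eq_sub, vadd_eq_add, ← hdiff, smul_smul, div_mul_cancel₀ _ hba, ← hu₂,
    sub_add_cancel]

lemma AffineMap.apply_mem_affineSpan_pair {k P₁ P₂ V₁ V₂ : Type*} [Ring k]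
    [AddCommGroup V₁] [Module k V₁] [AddTorsor V₁ P₁] [AddCommGroup V₂] [Module k V₂]
    [AddTorsor V₂ P₂] (f : P₁ →ᵃ[k] P₂) {p a b : P₁} (h : p ∈ line[k, a, b]) :
    f p ∈ line[k, f a, f b] := by
  obtain ⟨r, rfl⟩ := mem_affineSpan_pair_iff_exists_lineMap_eq.1 h
  rw [f.apply_lineMap]
  exact AffineMap.lineMap_mem_affineSpan_pair _ _ _

section Independence

variable {Ω β γ : Type*} [MeasurableSpace Ω] {P : Measure Ω} [IsProbabilityMeasure P]
  [MeasurableSpace β] [MeasurableSpace γ]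

lemma ProbabilityTheory.IndepFun.not_ae_eq_comp [MeasurableEq γ] {Y : Ω → β} {Z : Ω → γ}
    (hYZ : IndepFun Y Z P) (hY : AEMeasurable Y P) (hZ : AEMeasurable Z P)
    [NullSingletonClass (P.map Z)] {f : β → γ} (hf : Measurable f) :
    ¬ Z =ᵐ[P] f ∘ Y := by
  intro h
  set graph : Set (β × γ) := {x | x.2 = f x.1}
  have hgraph : MeasurableSet graph :=
    measurableSet_eq_fun measurable_snd (hf.comp measurable_fst)
  -- by independence the law of `(Y, Z)` is a product, and `Z` has no atoms to put on `f y`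
  have hnull : P.map (fun ω => (Y ω, Z ω)) graph = 0 := by
    rw [hYZ.map_prod_eq_prod_map_map hY hZ, Measure.prod_apply hgraph]
    simp [graph, Set.preimage, measure_singleton]
  have hfull : ∀ᵐ x ∂P.map (fun ω => (Y ω, Z ω)), x ∈ graph :=
    (ae_map_iff (hY.prodMk hZ) hgraph).2 h
  have := Measure.isProbabilityMeasure_map (μ := P) (hY.prodMk hZ)
  obtain ⟨x, hx, hx'⟩ := (hfull.and (measure_eq_zero_iff_ae_notMem.1 hnull)).exists
  exact hx' hx

lemma ProbabilityTheory.IndepFun.not_ae_mem_affineSpan_pair {Y Z : Ω → ℝ}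
    (hYZ : IndepFun Y Z P)
    (hY : AEMeasurable Y P) (hZ : AEMeasurable Z P)
    [NullSingletonClass (P.map Y)] [NullSingletonClass (P.map Z)]
    (a b : ℝ × ℝ) : ¬ ∀ᵐ ω ∂P, (Y ω, Z ω) ∈ line[ℝ, a, b] := by
  intro h
  have hline : ∀ᵐ ω ∂P, ∃ r : ℝ,
      Y ω = a.1 + r * (b.1 - a.1) ∧ Z ω = a.2 + r * (b.2 - a.2) := by
    filter_upwards [h] with ω hω
    obtain ⟨r, hr⟩ := mem_affineSpan_pair_iff_exists_lineMap_eq.1 hω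
    rw [AffineMap.lineMap_apply_module', Prod.ext_iff] at hr
    simp only [Prod.fst_add, Prod.snd_add, Prod.smul_fst, Prod.smul_snd, Prod.fst_sub,
      Prod.snd_sub, smul_eq_mul] at hr
    exact ⟨r, by linarith [hr.1], by linarith [hr.2]⟩
  by_cases hab : a.1 = b.1
  · refine hYZ.symm.not_ae_eq_comp hZ hY (measurable_const (a := a.1)) ?_
    filter_upwards [hline] with ω hω
    obtain ⟨r, hr, -⟩ := hω
    simp [hr, hab]
  · refine hYZ.not_ae_eq_comp hY hZ (f := fun y => a.2 + (y - a.1) / (b.1 - a.1) * (b.2 - a.2))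
      (by fun_prop) ?_
    filter_upwards [hline] with ω hω
    obtain ⟨r, hr, hr'⟩ := hω
    have : b.1 - a.1 ≠ 0 := sub_ne_zero.2 (Ne.symm hab)
    simp only [Function.comp_apply, hr, hr']
    field_simp
    ring

end Independence

lemma MeasureTheory.Measure.AbsolutelyContinuous.nullSingletonClass {α : Type*}
    [MeasurableSpace α] {μ ν : Measure α} [NullSingletonClass ν] (h : μ ≪ ν) :
    NullSingletonClass μ :=
  ⟨fun x => h (measure_singleton x)⟩

lemma abs_le_one_add_abs_rpow {q : ℝ} (hq : 1 ≤ q) (y : ℝ) : |y| ≤ 1 + |y| ^ q := by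
  rcases le_total |y| 1 with hy | hy
  · linarith [Real.rpow_nonneg (abs_nonneg y) q]
  · linarith [Real.self_le_rpow_of_one_le hy hq]

lemma MeasureTheory.integrable_of_lintegral_ofReal_abs_rpow_ne_top {Ω : Type*}
    [MeasurableSpace Ω] {P : Measure Ω} [IsFiniteMeasure P] {Y : Ω → ℝ} {q : ℝ}
    (hq : 1 ≤ q)
    (hY : AEStronglyMeasurable Y P) (hmom : ∫⁻ ω, ENNReal.ofReal (|Y ω| ^ q) ∂P ≠ ∞) :
    Integrable Y P := by
  refine ⟨hY, ?_⟩
  calc ∫⁻ ω, ‖Y ω‖ₑ ∂P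
      ≤ ∫⁻ ω, (1 + ENNReal.ofReal (|Y ω| ^ q)) ∂P := lintegral_mono fun ω => by
        rw [Real.enorm_eq_ofReal_abs, ← ENNReal.ofReal_one]
        exact (ENNReal.ofReal_le_ofReal (abs_le_one_add_abs_rpow hq _)).trans ENNReal.ofReal_add_le
    _ = P Set.univ + ∫⁻ ω, ENNReal.ofReal (|Y ω| ^ q) ∂P := by
        rw [lintegral_add_left measurable_const, lintegral_const, one_mul]
    _ < ∞ := ENNReal.add_lt_top.2 ⟨measure_lt_top P _, hmom.lt_top⟩

lemma integrable_vecOf {Ω : Type*} [MeasurableSpace Ω] {P : Measure Ω} {X : ℕ → Ω → ℝ}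
    (hX : ∀ i, Integrable (X i) P) (p : ℕ) : Integrable (vecOf X p) P :=
  Integrable.of_eval_piLp fun i => hX i

lemma MDependent.indepFun {Ω : Type*} [MeasurableSpace Ω] {P : Measure Ω} {M : ℕ}
    {X : ℕ → Ω → ℝ} (hX : MDependent P M X) {i j : ℕ} (hij : i + M < j) :
    IndepFun (X i) (X j) P :=
  (hX i).comp (φ := fun x : {k // k ≤ i} → ℝ => x ⟨i, le_rfl⟩)
    (ψ := fun x : {k // i + M + 1 ≤ k} → ℝ => x ⟨j, hij⟩)
    (measurable_pi_apply _) (measurable_pi_apply _)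

theorem exists_unique_geometric_median_general
    {Ω : Type*} [MeasurableSpace Ω] (P : Measure Ω) [IsProbabilityMeasure P]
    (M : ℕ) (q c σmin C : ℝ) (hq : 2 ≤ q)
    (X : ℕ → Ω → ℝ) (hX : MemD P M q c σmin C X)
    (p : ℕ) (hp : M + 2 ≤ p) :
    ∃! m : EuclideanSpace ℝ (Fin p), IsGeometricMedian P (vecOf X p) m := by
  have hV : Integrable (vecOf X p) P := integrable_vecOf (fun i =>
    integrable_of_lintegral_ofReal_abs_rpow_ne_top (by linarith)
      (hX.measurable i).aestronglyMeasurable (ne_top_of_le_ne_top ENNReal.ofReal_ne_top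
        (hX.mom_le i))) p
  obtain ⟨m, hm⟩ := exists_forall_integral_norm_sub_le hV
  refine ⟨m, hm, fun m' hm' => by_contra fun hne => ?_⟩
  have hline : ∀ᵐ ω ∂P, vecOf X p ω ∈ line[ℝ, m', m] := by
    filter_upwards [ae_sameRay_sub_of_forall_integral_norm_sub_le hV hm' hm] with ω hω
    exact mem_affineSpan_pair_of_sameRay_sub hne hω
  let i : Fin p := ⟨0, by omega⟩
  let j : Fin p := ⟨M + 1, by omega⟩
  let π : EuclideanSpace ℝ (Fin p) →ᵃ[ℝ] ℝ × ℝ :=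
    ((EuclideanSpace.proj i).toLinearMap.prod (EuclideanSpace.proj j).toLinearMap).toAffineMap
  have := (hX.absCont 0).nullSingletonClass
  have := (hX.absCont (M + 1)).nullSingletonClass
  refine (hX.mdep.indepFun (i := 0) (j := M + 1) (by omega)).not_ae_mem_affineSpan_pair
    (hX.measurable _).aemeasurable (hX.measurable _).aemeasurable (π m') (π m) ?_
  filter_upwards [hline] with ω hω
  exact π.apply_mem_affineSpan_pair hω

/-- Existence and uniqueness of the geometric median for sequences in the class `D`,
when `p ≥ M + 2`. -/
theorem exists_unique_geometric_median
    {Ω : Type*} [MeasurableSpace Ω] (P : Measure Ω) [IsProbabilityMeasure P]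
    (M : ℕ) (q c σmin C : ℝ) (hc : 0 < c) (hσ : 0 < σmin) (hq : 2 ≤ q) (hC : 1 ≤ C)
    (X : ℕ → Ω → ℝ) (hX : MemD P M q c σmin C X)
    (p : ℕ) (hp : M + 2 ≤ p) :
    ∃! m : EuclideanSpace ℝ (Fin p), IsGeometricMedian P (vecOf X p) m :=
  exists_unique_geometric_median_general P M q c σmin C hq X hX p hp
end
end

section
/- Fix an integer M ≥ 0 and reals c, σ_min > 0, q > 2, C ≥ 1, together with k > 0 and C₂ < ∞. Then there exists a finite constant β = β(k, C₂, M, q, c, σ_min, C) such that: for every sequence (Y_i)_{i∈ℕ} ∈ D(M, q, c, σ_min, C), every p ≥ ⌈4k⌉(M+1) + 1, and every vector v_p ∈ ℝ^p with ‖v_p‖² ≤ C₂ p, one has E[ ( ‖Y − v_p‖² / E‖Y − v_p‖² )^{−k} ] ≤ β, where Y := (Y_1, …, Y_p). -/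
open MeasureTheory ProbabilityTheory Filter
open scoped ENNReal

noncomputable section

/-!
The law of each `Y i` has density at most `c`, so `(Y i - v i)²` is rarely small: its Laplace
transform is at most `exp (-a t)` for `t ≤ T = (4c)²` and at most `ρ (T / t)^(1/2)` beyond, with
`ρ = √π / 4 < 1`. By `M`-dependence the coordinates `0, M + 1, 2(M + 1), …` below `p` are
independent; there are `n > 4k` of them and `p ≤ n (M + 1)`. The sum `S` of their squared
deviations thus has Laplace transform at most `exp (-n a t)`, resp. `ρⁿ (T / t)^(n/2)`, and
`Γ(k) E[S^(-k)] = ∫₀^∞ t^(k-1) E[exp (-t S)] dt` gives `E[S^(-k)] ≤ (n a)^(-k) + ρⁿ T^k / (k Γ(k))`.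
As `‖Y - v‖² ≥ S` and `E‖Y - v‖² ≤ (2 + 2C + 2C₂) p`, the normalised inverse moment is at most
a constant plus a multiple of `n^k ρⁿ`, which is bounded in `n`.
-/

open Real Set

section Independence

variable {Ω β : Type*} [MeasurableSpace Ω] [MeasurableSpace β] {P : Measure Ω}

theorem iIndepFun_of_indepFun_succ [IsProbabilityMeasure P] {X : ℕ → Ω → β}
    (h : ∀ n, IndepFun (fun ω (i : {i // i ≤ n}) => X i ω) (X (n + 1)) P) :
    iIndepFun X P := by
  classical
  rw [iIndepFun_iff_measure_inter_preimage_eq_mul]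
  intro S
  induction S using Finset.induction_on_max with
  | empty => simp
  | insert a s hlt ih =>
    intro sets hsets
    obtain rfl | ⟨n, rfl⟩ : a = 0 ∨ ∃ n, a = n + 1 := by cases a <;> simp
    · obtain rfl : s = ∅ := Finset.eq_empty_of_forall_notMem fun i hi => by
        simpa using hlt i hi
      simp
    have hle : ∀ i ∈ s, i ≤ n := fun i hi => Nat.lt_succ_iff.1 (hlt i hi)
    set E : Set ({i // i ≤ n} → β) := ⋂ i ∈ s.attach, (fun x => x ⟨i, hle i i.2⟩) ⁻¹' sets i
    have hE : MeasurableSet E := .biInter (Finset.countable_toSet _) fun i _ =>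
      measurable_pi_apply _ (hsets i (Finset.mem_insert_of_mem i.2))
    have hpre : (fun ω (i : {i // i ≤ n}) => X i ω) ⁻¹' E = ⋂ i ∈ s, X i ⁻¹' sets i := by
      ext ω
      simp [E]
    rw [Finset.set_biInter_insert, Finset.prod_insert fun ha => (hlt _ ha).false, Set.inter_comm,
      ← hpre, (h n).measure_inter_preimage_eq_mul _ _ hE (hsets _ (Finset.mem_insert_self _ _)),
      hpre, ih fun i hi => hsets i (Finset.mem_insert_of_mem hi), mul_comm]

theorem MDependent.iIndepFun_comp_mul [IsProbabilityMeasure P] {M : ℕ} {Y : ℕ → Ω → ℝ}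
    (hdep : MDependent P M Y) :
    iIndepFun (fun j ω => Y (j * (M + 1)) ω) P := by
  refine iIndepFun_of_indepFun_succ fun n => ?_
  have hle (j : {j // j ≤ n}) : j.1 * (M + 1) ≤ n * (M + 1) := Nat.mul_le_mul_right _ j.2
  have hge : n * (M + 1) + M + 1 ≤ (n + 1) * (M + 1) := by ring_nf; omega
  have hφ : Measurable fun (x : {i // i ≤ n * (M + 1)} → ℝ) (j : {j // j ≤ n}) =>
      x ⟨_, hle j⟩ := by fun_prop
  have hψ : Measurable fun (x : {i // n * (M + 1) + M + 1 ≤ i} → ℝ) => x ⟨_, hge⟩ :=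
    measurable_pi_apply _
  exact (hdep _).comp hφ hψ

end Independence

theorem ofReal_mgf_neg_eq_lintegral {Ω : Type*} [MeasurableSpace Ω] {P : Measure Ω}
    [IsFiniteMeasure P] {X : Ω → ℝ} (hX : Measurable X) (hX0 : ∀ ω, 0 ≤ X ω) {t : ℝ}
    (ht : 0 ≤ t) :
    ENNReal.ofReal (mgf X P (-t)) = ∫⁻ ω, ENNReal.ofReal (exp (-(t * X ω))) ∂P := by
  have hint : Integrable (fun ω => exp (-(t * X ω))) P := by
    refine .of_bound (by fun_prop) 1 (.of_forall fun ω => ?_)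
    rw [norm_of_nonneg (exp_pos _).le, exp_le_one_iff, neg_nonpos]
    exact mul_nonneg ht (hX0 ω)
  simp_rw [mgf, neg_mul]
  exact ofReal_integral_eq_lintegral_ofReal (by simpa only [neg_mul] using hint)
    (.of_forall fun ω => (exp_pos _).le)

theorem one_add_exp_neg_div_two_le {u : ℝ} (hu0 : 0 ≤ u) (hu1 : u ≤ 1) :
    (1 + exp (-u)) / 2 ≤ exp (-((1 - exp (-1)) / 2 * u)) := by
  have hconv : exp (-u) ≤ 1 - u * (1 - exp (-1)) := by
    have := convexOn_exp.2 (mem_univ (-1)) (mem_univ 0) hu0 (sub_nonneg.2 hu1) (by ring)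
    simp only [smul_eq_mul, mul_zero, add_zero, exp_zero, mul_one, mul_neg_one] at this
    linarith
  linarith [add_one_le_exp (-((1 - exp (-1)) / 2 * u))]

section Density

variable {Ω : Type*} [MeasurableSpace Ω] {P : Measure Ω}

structure HasDensityLE (P : Measure Ω) (Z : Ω → ℝ) (c : ℝ) : Prop where
  measurable : Measurable Z
  absCont : P.map Z ≪ volume
  rnDeriv_le : ∀ᵐ x, (P.map Z).rnDeriv volume x ≤ ENNReal.ofReal c

theorem MemD.hasDensityLE {M : ℕ} {q c σmin C : ℝ} {Y : ℕ → Ω → ℝ}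
    (hY : MemD P M q c σmin C Y) (i : ℕ) : HasDensityLE P (Y i) c :=
  ⟨hY.measurable i, hY.absCont i, hY.density_le i⟩

namespace HasDensityLE

variable {Z : Ω → ℝ} {c : ℝ}

theorem ae_ne (hZ : HasDensityLE P Z c) (w : ℝ) : ∀ᵐ ω ∂P, Z ω ≠ w := by
  have : P (Z ⁻¹' {w}) = 0 := by
    rw [← Measure.map_apply hZ.measurable (measurableSet_singleton w)]
    exact hZ.absCont (Real.volume_singleton)
  exact measure_eq_zero_iff_ae_notMem.1 this

theorem ae_sum_sq_sub_pos {Z : ℕ → Ω → ℝ} (hZ : HasDensityLE P (Z 0) c) (w : ℕ → ℝ) {n : ℕ}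
    (hn : 0 < n) :
    ∀ᵐ ω ∂P, 0 < ∑ j ∈ Finset.range n, (Z j ω - w j) ^ 2 := by
  filter_upwards [hZ.ae_ne (w 0)] with ω hω
  exact Finset.sum_pos' (fun j _ => sq_nonneg _)
    ⟨0, Finset.mem_range.2 hn, pow_two_pos_of_ne_zero (sub_ne_zero.2 hω)⟩

theorem lintegral_comp_le [IsFiniteMeasure P] (hZ : HasDensityLE P Z c) {f : ℝ → ℝ≥0∞}
    (hf : Measurable f) :
    ∫⁻ ω, f (Z ω) ∂P ≤ ENNReal.ofReal c * ∫⁻ x, f x := by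
  rw [← lintegral_map hf hZ.measurable, ← lintegral_rnDeriv_mul hZ.absCont hf.aemeasurable,
    ← lintegral_const_mul _ hf]
  exact lintegral_mono_ae (hZ.rnDeriv_le.mono fun x hx => mul_le_mul_left hx _)

theorem measure_preimage_Icc_le [IsFiniteMeasure P] (hZ : HasDensityLE P Z c) (a b : ℝ) :
    P (Z ⁻¹' Icc a b) ≤ ENNReal.ofReal c * ENNReal.ofReal (b - a) := by
  simpa [← Real.volume_Icc, lintegral_indicator_one measurableSet_Icc,
    ← Set.indicator_comp_right, lintegral_indicator_one (hZ.measurable measurableSet_Icc)]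
    using hZ.lintegral_comp_le (f := (Icc a b).indicator 1)
      (measurable_one.indicator measurableSet_Icc)

theorem mgf_neg_sq_sub_le_rpow [IsFiniteMeasure P] (hZ : HasDensityLE P Z c) (hc : 0 < c)
    (w : ℝ) {t : ℝ} (ht : 0 < t) :
    mgf (fun ω => (Z ω - w) ^ 2) P (-t) ≤ √π / 4 * ((4 * c) ^ 2 / t) ^ (1 / 2 : ℝ) := by
  have hgauss : ∫⁻ x, ENNReal.ofReal (exp (-(t * (x - w) ^ 2))) = ENNReal.ofReal √(π / t) := by
    have hint : Integrable fun x : ℝ => exp (-(t * (x - w) ^ 2)) := by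
      simpa only [neg_mul] using (integrable_exp_neg_mul_sq ht).comp_sub_right w
    rw [← ofReal_integral_eq_lintegral_ofReal hint (.of_forall fun x => (exp_pos _).le),
      integral_sub_right_eq_self (fun x => exp (-(t * x ^ 2))) w]
    simp only [← neg_mul, integral_gaussian]
  have hbound : ENNReal.ofReal (mgf (fun ω => (Z ω - w) ^ 2) P (-t))
      ≤ ENNReal.ofReal (c * √(π / t)) := by
    rw [ofReal_mgf_neg_eq_lintegral ((hZ.measurable.sub_const w).pow_const 2)
      (fun _ => sq_nonneg _) ht.le, ENNReal.ofReal_mul hc.le, ← hgauss]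
    exact hZ.lintegral_comp_le (f := fun x => ENNReal.ofReal (exp (-(t * (x - w) ^ 2))))
      (by fun_prop)
  rw [ENNReal.ofReal_le_ofReal_iff (by positivity)] at hbound
  refine hbound.trans_eq ?_
  rw [← sqrt_eq_rpow, sqrt_div' _ ht.le, sqrt_div' _ ht.le, sqrt_sq (by positivity)]
  ring

theorem mgf_neg_sq_sub_le_one_add_exp [IsProbabilityMeasure P] (hZ : HasDensityLE P Z c)
    (hc : 0 < c) (w : ℝ) {t : ℝ} (ht : 0 ≤ t) :
    mgf (fun ω => (Z ω - w) ^ 2) P (-t) ≤ (1 + exp (-(t / (4 * c) ^ 2))) / 2 := by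
  set δ := (4 * c)⁻¹
  set I := Icc (w - δ) (w + δ)
  set e := exp (-(t / (4 * c) ^ 2))
  have he1 : e ≤ 1 := exp_le_one_iff.2 (neg_nonpos.2 (by positivity))
  -- away from `I` the integrand is at most `e`, and `I` has probability at most `1 / 2`
  have hpt (x : ℝ) :
      ENNReal.ofReal (exp (-(t * (x - w) ^ 2))) ≤ I.indicator (fun _ => ENNReal.ofReal (1 - e)) x
        + ENNReal.ofReal e := by
    by_cases hx : x ∈ I
    · rw [indicator_of_mem hx, ← ENNReal.ofReal_add (by linarith) (exp_pos _).le, sub_add_cancel]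
      exact ENNReal.ofReal_le_ofReal (exp_le_one_iff.2 (neg_nonpos.2 (by positivity)))
    · rw [indicator_of_notMem hx, zero_add]
      refine ENNReal.ofReal_le_ofReal (exp_le_exp.2 (neg_le_neg ?_))
      have hδ : δ ^ 2 ≤ (x - w) ^ 2 := by
        rw [mem_Icc, not_and_or, not_le, not_le] at hx
        rcases hx with hx | hx <;> nlinarith [inv_pos.2 (by positivity : 0 < 4 * c)]
      calc t / (4 * c) ^ 2 = t * δ ^ 2 := by rw [inv_pow, div_eq_mul_inv]
        _ ≤ t * (x - w) ^ 2 := mul_le_mul_of_nonneg_left hδ ht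
  have hI : P (Z ⁻¹' I) ≤ ENNReal.ofReal (1 / 2) := by
    refine (hZ.measure_preimage_Icc_le _ _).trans_eq ?_
    rw [← ENNReal.ofReal_mul hc.le]
    congr 1
    simp only [δ]
    field_simp
    ring
  have hbound : ENNReal.ofReal (mgf (fun ω => (Z ω - w) ^ 2) P (-t))
      ≤ ENNReal.ofReal ((1 + e) / 2) := by
    rw [ofReal_mgf_neg_eq_lintegral ((hZ.measurable.sub_const w).pow_const 2)
      (fun _ => sq_nonneg _) ht]
    calc ∫⁻ ω, ENNReal.ofReal (exp (-(t * (Z ω - w) ^ 2))) ∂P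
        ≤ ∫⁻ ω, (I.indicator (fun _ => ENNReal.ofReal (1 - e)) (Z ω) + ENNReal.ofReal e) ∂P :=
          lintegral_mono fun ω => hpt (Z ω)
      _ = ENNReal.ofReal (1 - e) * P (Z ⁻¹' I) + ENNReal.ofReal e := by
          rw [lintegral_add_right _ measurable_const, lintegral_const, measure_univ, mul_one,
            lintegral_indicator_const_comp hZ.measurable measurableSet_Icc]
      _ ≤ ENNReal.ofReal (1 - e) * ENNReal.ofReal (1 / 2) + ENNReal.ofReal e := by gcongr
      _ = ENNReal.ofReal ((1 + e) / 2) := by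
          rw [← ENNReal.ofReal_mul (by linarith), ← ENNReal.ofReal_add (by nlinarith)
            (exp_pos _).le]
          congr 1
          ring
  exact (ENNReal.ofReal_le_ofReal_iff (by positivity)).1 hbound

theorem mgf_neg_sq_sub_le_exp [IsProbabilityMeasure P] (hZ : HasDensityLE P Z c)
    (hc : 0 < c) (w : ℝ) {t : ℝ} (ht : t ∈ Ioc 0 ((4 * c) ^ 2)) :
    mgf (fun ω => (Z ω - w) ^ 2) P (-t) ≤ exp (-((1 - exp (-1)) / 2 / (4 * c) ^ 2 * t)) := by
  have hu1 : t / (4 * c) ^ 2 ≤ 1 := (div_le_one (by positivity)).2 ht.2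
  calc mgf (fun ω => (Z ω - w) ^ 2) P (-t) ≤ (1 + exp (-(t / (4 * c) ^ 2))) / 2 :=
        hZ.mgf_neg_sq_sub_le_one_add_exp hc w ht.1.le
    _ ≤ exp (-((1 - exp (-1)) / 2 * (t / (4 * c) ^ 2))) :=
        one_add_exp_neg_div_two_le (div_nonneg ht.1.le (by positivity)) hu1
    _ = exp (-((1 - exp (-1)) / 2 / (4 * c) ^ 2 * t)) := by ring_nf

end HasDensityLE

end Density

theorem lintegral_rpow_mul_exp_neg_mul_Ioi {k s : ℝ} (hk : 0 < k) (hs : 0 < s) :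
    ∫⁻ t in Ioi 0, ENNReal.ofReal (t ^ (k - 1) * exp (-(s * t)))
      = ENNReal.ofReal (s ^ (-k) * Gamma k) := by
  have hint : IntegrableOn (fun t : ℝ => t ^ (k - 1) * exp (-(s * t))) (Ioi 0) := by
    simpa only [rpow_one, neg_mul] using
      integrableOn_rpow_mul_exp_neg_mul_rpow (p := 1) (by linarith) one_pos hs
  rw [← ofReal_integral_eq_lintegral_ofReal hint
    ((ae_restrict_iff' measurableSet_Ioi).2 (.of_forall fun t (ht : 0 < t) => by positivity)),
    integral_rpow_mul_exp_neg_mul_Ioi hk hs, one_div, inv_rpow hs.le, rpow_neg hs.le]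

theorem lintegral_Ioi_rpow_mul_div_rpow {k γ T : ℝ} (hkγ : k < γ) (hT : 0 < T) :
    ∫⁻ t in Ioi T, ENNReal.ofReal (t ^ (k - 1) * (T / t) ^ γ)
      = ENNReal.ofReal (T ^ k / (γ - k)) := by
  have hlt : k - 1 - γ < -1 := by linarith
  have heq : ∀ t ∈ Ioi T, t ^ (k - 1) * (T / t) ^ γ = T ^ γ * t ^ (k - 1 - γ) := by
    intro t (ht : T < t)
    have ht0 : 0 < t := hT.trans ht
    rw [div_rpow hT.le ht0.le, sub_eq_add_neg (k - 1), rpow_add ht0, rpow_neg ht0.le]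
    ring
  have hTk : T ^ γ * T ^ (k - γ) = T ^ k := by rw [← rpow_add hT]; ring_nf
  rw [setLIntegral_congr_fun measurableSet_Ioi (fun t ht => by rw [heq t ht]),
    ← ofReal_integral_eq_lintegral_ofReal ((integrableOn_Ioi_rpow_of_lt hlt hT).const_mul _)
      ((ae_restrict_iff' measurableSet_Ioi).2 (.of_forall fun t (ht : T < t) =>
        show (0 : ℝ) ≤ _ by have := hT.trans ht; positivity)),
    integral_const_mul, integral_Ioi_rpow_of_lt hlt hT, show k - 1 - γ + 1 = k - γ by ring,
    show γ - k = -(k - γ) by ring, div_neg, ← hTk]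
  ring_nf

section InverseMoment

variable {Ω : Type*} [MeasurableSpace Ω] {P : Measure Ω} {S : Ω → ℝ} {k : ℝ}

theorem lintegral_rpow_neg_mul_Gamma [IsFiniteMeasure P] (hS : Measurable S)
    (hS0 : ∀ ω, 0 ≤ S ω) (hSpos : ∀ᵐ ω ∂P, 0 < S ω) (hk : 0 < k) :
    (∫⁻ ω, ENNReal.ofReal (S ω ^ (-k)) ∂P) * ENNReal.ofReal (Gamma k)
      = ∫⁻ t in Ioi 0, ENNReal.ofReal (t ^ (k - 1) * mgf S P (-t)) := by
  have hmeas : Measurable (Function.uncurry fun ω (t : ℝ) =>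
      ENNReal.ofReal (t ^ (k - 1) * exp (-(S ω * t)))) := by
    fun_prop (disch := exact hS)
  calc (∫⁻ ω, ENNReal.ofReal (S ω ^ (-k)) ∂P) * ENNReal.ofReal (Gamma k)
      = ∫⁻ ω, ∫⁻ t in Ioi 0, ENNReal.ofReal (t ^ (k - 1) * exp (-(S ω * t))) ∂volume ∂P := by
        rw [← lintegral_mul_const' _ _ ENNReal.ofReal_ne_top]
        refine lintegral_congr_ae (hSpos.mono fun ω hω => ?_)
        dsimp only
        rw [lintegral_rpow_mul_exp_neg_mul_Ioi hk hω, ENNReal.ofReal_mul (by positivity)]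
    _ = ∫⁻ t in Ioi 0, ∫⁻ ω, ENNReal.ofReal (t ^ (k - 1) * exp (-(S ω * t))) ∂P ∂volume :=
        lintegral_lintegral_swap hmeas.aemeasurable
    _ = ∫⁻ t in Ioi 0, ENNReal.ofReal (t ^ (k - 1) * mgf S P (-t)) := by
        refine setLIntegral_congr_fun measurableSet_Ioi fun t (ht : 0 < t) => ?_
        simp_rw [ENNReal.ofReal_mul (rpow_nonneg ht.le _), mul_comm _ t]
        rw [lintegral_const_mul _ (by fun_prop (disch := exact hS)),
          ofReal_mgf_neg_eq_lintegral hS hS0 ht.le]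

theorem lintegral_rpow_neg_le_of_mgf_le [IsFiniteMeasure P] (hS : Measurable S)
    (hS0 : ∀ ω, 0 ≤ S ω) (hSpos : ∀ᵐ ω ∂P, 0 < S ω) (hk : 0 < k) {α T D γ : ℝ} (hα : 0 < α)
    (hT : 0 < T) (hD : 0 ≤ D) (hkγ : k < γ)
    (hsmall : ∀ t ∈ Ioc 0 T, mgf S P (-t) ≤ exp (-(α * t)))
    (hlarge : ∀ t, T < t → mgf S P (-t) ≤ D * (T / t) ^ γ) :
    ∫⁻ ω, ENNReal.ofReal (S ω ^ (-k)) ∂P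
      ≤ ENNReal.ofReal (α ^ (-k) + D * T ^ k / ((γ - k) * Gamma k)) := by
  have hG : 0 < Gamma k := Gamma_pos_of_pos hk
  have hsmall' : ∫⁻ t in Ioc 0 T, ENNReal.ofReal (t ^ (k - 1) * mgf S P (-t))
      ≤ ENNReal.ofReal (α ^ (-k) * Gamma k) := by
    rw [← lintegral_rpow_mul_exp_neg_mul_Ioi hk hα]
    refine (setLIntegral_mono' measurableSet_Ioc fun t ht => ?_).trans
      (lintegral_mono_set Ioc_subset_Ioi_self)
    exact ENNReal.ofReal_le_ofReal
      (mul_le_mul_of_nonneg_left (hsmall t ht) (rpow_nonneg ht.1.le _))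
  have hlarge' : ∫⁻ t in Ioi T, ENNReal.ofReal (t ^ (k - 1) * mgf S P (-t))
      ≤ ENNReal.ofReal (D * (T ^ k / (γ - k))) := by
    rw [ENNReal.ofReal_mul hD, ← lintegral_Ioi_rpow_mul_div_rpow hkγ hT,
      ← lintegral_const_mul _ (by fun_prop)]
    refine setLIntegral_mono' measurableSet_Ioi fun t (ht : T < t) => ?_
    rw [← ENNReal.ofReal_mul hD]
    refine ENNReal.ofReal_le_ofReal ?_
    calc t ^ (k - 1) * mgf S P (-t) ≤ t ^ (k - 1) * (D * (T / t) ^ γ) :=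
          mul_le_mul_of_nonneg_left (hlarge t ht) (rpow_nonneg (hT.trans ht).le _)
      _ = D * (t ^ (k - 1) * (T / t) ^ γ) := by ring
  have hsum : (∫⁻ ω, ENNReal.ofReal (S ω ^ (-k)) ∂P) * ENNReal.ofReal (Gamma k)
      ≤ ENNReal.ofReal (α ^ (-k) * Gamma k + D * (T ^ k / (γ - k))) := by
    rw [lintegral_rpow_neg_mul_Gamma hS hS0 hSpos hk, ← Ioc_union_Ioi_eq_Ioi hT.le,
      lintegral_union measurableSet_Ioi (Ioc_disjoint_Ioi le_rfl),
      ENNReal.ofReal_add (by positivity) (mul_nonneg hD (div_nonneg (by positivity)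
        (by linarith)))]
    exact add_le_add hsmall' hlarge'
  rw [← ENNReal.le_div_iff_mul_le (.inl (ENNReal.ofReal_pos.2 hG).ne')
    (.inl ENNReal.ofReal_ne_top), ← ENNReal.ofReal_div_of_pos hG] at hsum
  refine hsum.trans_eq (congrArg ENNReal.ofReal ?_)
  field_simp

theorem lintegral_sum_rpow_neg_le {X : ℕ → Ω → ℝ}
    (hX : ∀ j, Measurable (X j)) (hX0 : ∀ j ω, 0 ≤ X j ω) (hind : iIndepFun X P) (hk : 0 < k)
    {a T ρ : ℝ} (ha : 0 < a) (hT : 0 < T) (hρ : 0 ≤ ρ) {n : ℕ} (hkn : 4 * k < n)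
    (hsmall : ∀ j, ∀ t ∈ Ioc 0 T, mgf (X j) P (-t) ≤ exp (-(a * t)))
    (hlarge : ∀ j, ∀ t, T < t → mgf (X j) P (-t) ≤ ρ * (T / t) ^ (1 / 2 : ℝ))
    (hpos : ∀ᵐ ω ∂P, 0 < ∑ j ∈ Finset.range n, X j ω) :
    ∫⁻ ω, ENNReal.ofReal ((∑ j ∈ Finset.range n, X j ω) ^ (-k)) ∂P
      ≤ ENNReal.ofReal ((n * a) ^ (-k) + ρ ^ n * T ^ k / (k * Gamma k)) := by
  have := hind.isProbabilityMeasure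
  have hmgf (t : ℝ) : mgf (fun ω => ∑ j ∈ Finset.range n, X j ω) P (-t)
      = ∏ j ∈ Finset.range n, mgf (X j) P (-t) := by
    simpa only [← Finset.sum_apply] using hind.mgf_sum hX (Finset.range n)
  have hn : (0 : ℝ) < n := by linarith
  refine (lintegral_rpow_neg_le_of_mgf_le (Finset.measurable_sum _ fun j _ => hX j)
    (fun ω => Finset.sum_nonneg fun j _ => hX0 j ω) hpos hk (α := n * a) (by positivity) hT
    (pow_nonneg hρ n) (γ := n / 2) (by linarith) (fun t ht => ?_) (fun t ht => ?_)).trans ?_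
  · calc mgf (fun ω => ∑ j ∈ Finset.range n, X j ω) P (-t)
        ≤ ∏ _j ∈ Finset.range n, exp (-(a * t)) := by
          rw [hmgf]
          exact Finset.prod_le_prod (fun j _ => mgf_nonneg) fun j _ => hsmall j t ht
      _ = exp (-(n * a * t)) := by
          rw [Finset.prod_const, Finset.card_range, ← exp_nat_mul]
          ring_nf
  · have hTt : 0 ≤ T / t := div_nonneg hT.le (hT.trans ht).le
    calc mgf (fun ω => ∑ j ∈ Finset.range n, X j ω) P (-t)
        ≤ ∏ _j ∈ Finset.range n, ρ * (T / t) ^ (1 / 2 : ℝ) := by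
          rw [hmgf]
          exact Finset.prod_le_prod (fun j _ => mgf_nonneg) fun j _ => hlarge j t ht
      _ = ρ ^ n * (T / t) ^ ((n : ℝ) / 2) := by
          rw [Finset.prod_const, Finset.card_range, mul_pow,
            ← rpow_natCast ((T / t) ^ (1 / 2 : ℝ)) n, ← rpow_mul hTt]
          ring_nf
  · refine ENNReal.ofReal_le_ofReal (add_le_add le_rfl ?_)
    have := Gamma_pos_of_pos hk
    gcongr
    linarith

end InverseMoment

theorem Nat.exists_lt_and_forall_mul_succ_lt {Q M p : ℕ} (hp : Q * (M + 1) + 1 ≤ p) :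
    ∃ n, Q < n ∧ p ≤ n * (M + 1) ∧ ∀ j < n, j * (M + 1) < p := by
  refine ⟨(p - 1) / (M + 1) + 1, ?_, ?_, fun j hj => ?_⟩
  · rw [Nat.lt_succ_iff, Nat.le_div_iff_mul_le (by omega : 0 < M + 1)]
    omega
  · have := Nat.lt_div_mul_add (a := p - 1) (by omega : 0 < M + 1)
    rw [add_mul, one_mul]
    omega
  · have := Nat.div_mul_le_self (p - 1) (M + 1)
    have := Nat.mul_le_mul_right (M + 1) (Nat.lt_succ_iff.1 hj)
    omega

theorem sum_range_mul_succ_le_sum_fin {f : ℕ → ℝ} (hf : ∀ i, 0 ≤ f i) {M n p : ℕ}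
    (hnp : ∀ j < n, j * (M + 1) < p) :
    ∑ j ∈ Finset.range n, f (j * (M + 1)) ≤ ∑ i : Fin p, f i := by
  rw [Fin.sum_univ_eq_sum_range f, ← Finset.sum_image fun _ _ _ _ h =>
    Nat.eq_of_mul_eq_mul_right (by omega : 0 < M + 1) h]
  refine Finset.sum_le_sum_of_subset_of_nonneg ?_ fun i _ _ => hf i
  simpa [Finset.subset_iff] using hnp

theorem norm_vecOf_sub_sq {Ω : Type*} (Y : ℕ → Ω → ℝ) (p : ℕ) (ω : Ω)
    (v : EuclideanSpace ℝ (Fin p)) : ‖vecOf Y p ω - v‖ ^ 2 = ∑ i : Fin p, (Y i ω - v i) ^ 2 := by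
  simp [EuclideanSpace.real_norm_sq_eq, vecOf]

theorem sum_sq_sub_le_norm_vecOf_sub_sq {Ω : Type*} (Y : ℕ → Ω → ℝ) {p : ℕ}
    (v : EuclideanSpace ℝ (Fin p)) {w : ℕ → ℝ} (hw : ∀ i : Fin p, w i = v i) {M n : ℕ}
    (hnp : ∀ j < n, j * (M + 1) < p) (ω : Ω) :
    ∑ j ∈ Finset.range n, (Y (j * (M + 1)) ω - w (j * (M + 1))) ^ 2 ≤ ‖vecOf Y p ω - v‖ ^ 2 := by
  rw [norm_vecOf_sub_sq]
  convert sum_range_mul_succ_le_sum_fin (f := fun i => (Y i ω - w i) ^ 2)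
    (fun _ => sq_nonneg _) hnp using 2 with i
  rw [hw]

theorem sq_le_one_add_abs_rpow {q : ℝ} (hq : 2 ≤ q) (y : ℝ) : y ^ 2 ≤ 1 + |y| ^ q := by
  rcases le_or_gt |y| 1 with hy | hy
  · nlinarith [abs_nonneg y, sq_abs y, rpow_nonneg (abs_nonneg y) q]
  · have := rpow_le_rpow_of_exponent_le hy.le hq
    rw [rpow_two, sq_abs] at this
    linarith

theorem rpow_neg_div_le_rpow_div {s d e m k : ℝ} (hs : 0 < s) (hsd : s ≤ d) (he : 0 ≤ e)
    (hem : e ≤ m) (hk : 0 < k) : (d / e) ^ (-k) ≤ (m / s) ^ k := by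
  rcases he.eq_or_lt with rfl | he
  · rw [div_zero, zero_rpow (neg_ne_zero.2 hk.ne')]
    exact rpow_nonneg (div_nonneg hem hs.le) k
  rw [rpow_neg (div_nonneg (hs.le.trans hsd) he.le), ← inv_rpow (div_nonneg (hs.le.trans hsd)
    he.le), inv_div]
  exact rpow_le_rpow (div_nonneg he.le (hs.trans_le hsd).le) (div_le_div₀ (he.le.trans hem)
    hem hs hsd) hk.le

section Moments

variable {Ω : Type*} [MeasurableSpace Ω] {P : Measure Ω}

theorem lintegral_ofReal_div_rpow_neg_le {S D : Ω → ℝ} (hS : Measurable S)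
    (hSpos : ∀ᵐ ω ∂P, 0 < S ω) (hSD : ∀ ω, S ω ≤ D ω) {e m k : ℝ} (he : 0 ≤ e) (hem : e ≤ m)
    (hk : 0 < k) :
    ∫⁻ ω, ENNReal.ofReal ((D ω / e) ^ (-k)) ∂P
      ≤ ENNReal.ofReal (m ^ k) * ∫⁻ ω, ENNReal.ofReal (S ω ^ (-k)) ∂P := by
  rw [← lintegral_const_mul _ (by fun_prop)]
  refine lintegral_mono_ae (hSpos.mono fun ω hω => ?_)
  rw [← ENNReal.ofReal_mul (rpow_nonneg (he.trans hem) k), rpow_neg hω.le, ← div_eq_mul_inv,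
    ← div_rpow (he.trans hem) hω.le]
  exact ENNReal.ofReal_le_ofReal (rpow_neg_div_le_rpow_div hω (hSD ω) he hem hk)

variable [IsProbabilityMeasure P]

theorem lintegral_ofReal_sq_sub_le {Z : Ω → ℝ} (hZ : Measurable Z) {q C : ℝ} (hq : 2 ≤ q)
    (hC : 0 ≤ C) (hmom : ∫⁻ ω, ENNReal.ofReal (|Z ω| ^ q) ∂P ≤ ENNReal.ofReal C) (w : ℝ) :
    ∫⁻ ω, ENNReal.ofReal ((Z ω - w) ^ 2) ∂P ≤ ENNReal.ofReal (2 * (1 + C) + 2 * w ^ 2) := by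
  calc ∫⁻ ω, ENNReal.ofReal ((Z ω - w) ^ 2) ∂P
      ≤ ∫⁻ ω, (ENNReal.ofReal (2 + 2 * w ^ 2) + 2 * ENNReal.ofReal (|Z ω| ^ q)) ∂P := by
        refine lintegral_mono fun ω => ?_
        rw [← ENNReal.ofReal_ofNat 2, ← ENNReal.ofReal_mul zero_le_two,
          ← ENNReal.ofReal_add (by positivity) (by positivity)]
        refine ENNReal.ofReal_le_ofReal ?_
        nlinarith [sq_le_one_add_abs_rpow hq (Z ω), sq_nonneg (Z ω + w)]
    _ = ENNReal.ofReal (2 + 2 * w ^ 2) + 2 * ∫⁻ ω, ENNReal.ofReal (|Z ω| ^ q) ∂P := by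
        rw [lintegral_add_left measurable_const, lintegral_const_mul _ (by fun_prop),
          lintegral_const, measure_univ, mul_one]
    _ ≤ ENNReal.ofReal (2 + 2 * w ^ 2) + 2 * ENNReal.ofReal C := by gcongr
    _ = ENNReal.ofReal (2 * (1 + C) + 2 * w ^ 2) := by
        rw [← ENNReal.ofReal_ofNat 2, ← ENNReal.ofReal_mul zero_le_two,
          ← ENNReal.ofReal_add (by positivity) (by positivity)]
        ring_nf

theorem integral_norm_vecOf_sub_sq_le {Y : ℕ → Ω → ℝ} (hY : ∀ i, Measurable (Y i)) {q C : ℝ}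
    (hq : 2 ≤ q) (hC : 0 ≤ C) (hmom : ∀ i, ∫⁻ ω, ENNReal.ofReal (|Y i ω| ^ q) ∂P ≤ ENNReal.ofReal C)
    (p : ℕ) (v : EuclideanSpace ℝ (Fin p)) :
    ∫ ω, ‖vecOf Y p ω - v‖ ^ 2 ∂P ≤ 2 * (1 + C) * p + 2 * ‖v‖ ^ 2 := by
  simp_rw [norm_vecOf_sub_sq]
  rw [integral_eq_lintegral_of_nonneg_ae (.of_forall fun ω => by positivity) (by fun_prop)]
  refine ENNReal.toReal_le_of_le_ofReal (by positivity) ?_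
  calc ∫⁻ ω, ENNReal.ofReal (∑ i : Fin p, (Y i ω - v i) ^ 2) ∂P
      = ∑ i : Fin p, ∫⁻ ω, ENNReal.ofReal ((Y i ω - v i) ^ 2) ∂P := by
        simp_rw [ENNReal.ofReal_sum_of_nonneg fun i _ => sq_nonneg _]
        exact lintegral_finsetSum _ fun i _ => by fun_prop
    _ ≤ ∑ i : Fin p, ENNReal.ofReal (2 * (1 + C) + 2 * v i ^ 2) :=
        Finset.sum_le_sum fun i _ => lintegral_ofReal_sq_sub_le (hY i) hq hC (hmom i) _
    _ = ENNReal.ofReal (2 * (1 + C) * p + 2 * ‖v‖ ^ 2) := by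
        rw [← ENNReal.ofReal_sum_of_nonneg fun i _ => by positivity, Finset.sum_add_distrib,
          Finset.sum_const, ← Finset.mul_sum, EuclideanSpace.real_norm_sq_eq]
        simp [mul_comm]

end Moments

theorem exists_forall_rpow_mul_pow_le (k : ℝ) {ρ : ℝ} (hρ0 : 0 ≤ ρ) (hρ1 : ρ < 1) :
    ∃ B, ∀ n : ℕ, (n : ℝ) ^ k * ρ ^ n ≤ B := by
  obtain ⟨B, hB⟩ := (tendsto_pow_const_mul_const_pow_of_abs_lt_one ⌈k⌉₊
    (abs_lt.2 ⟨by linarith, hρ1⟩)).bddAbove_range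
  refine ⟨max B 1, fun n => ?_⟩
  rcases n.eq_zero_or_pos with rfl | hn
  · simpa using .inr (zero_rpow_le_one k)
  calc (n : ℝ) ^ k * ρ ^ n ≤ (n : ℝ) ^ ⌈k⌉₊ * ρ ^ n := by
        gcongr
        rw [← rpow_natCast]
        exact rpow_le_rpow_of_exponent_le (by exact_mod_cast hn) (Nat.le_ceil k)
    _ ≤ B := hB ⟨n, rfl⟩
    _ ≤ max B 1 := le_max_left _ _

theorem MDependent.lintegral_sum_sq_sub_rpow_neg_le {Ω : Type*} [MeasurableSpace Ω]
    {P : Measure Ω} [IsProbabilityMeasure P] {M : ℕ} {Y : ℕ → Ω → ℝ} (hdep : MDependent P M Y)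
    {c : ℝ} (hY : ∀ i, HasDensityLE P (Y i) c) (hc : 0 < c) (w : ℕ → ℝ) {k : ℝ} (hk : 0 < k)
    {n : ℕ} (hkn : 4 * k < n) :
    ∫⁻ ω, ENNReal.ofReal
        ((∑ j ∈ Finset.range n, (Y (j * (M + 1)) ω - w (j * (M + 1))) ^ 2) ^ (-k)) ∂P
      ≤ ENNReal.ofReal ((n * ((1 - exp (-1)) / 2 / (4 * c) ^ 2)) ^ (-k)
        + (√π / 4) ^ n * ((4 * c) ^ 2) ^ k / (k * Gamma k)) := by
  have hn : 0 < n := by exact_mod_cast (by linarith : (0 : ℝ) < n)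
  exact lintegral_sum_rpow_neg_le (fun j => ((hY _).measurable.sub_const _).pow_const 2)
    (fun _ _ => sq_nonneg _)
    (hdep.iIndepFun_comp_mul.comp (fun j y => (y - w (j * (M + 1))) ^ 2) fun j => by fun_prop)
    hk (div_pos (by linarith [exp_lt_one_iff.2 (neg_one_lt_zero (R := ℝ))]) (by positivity))
    (by positivity) (by positivity) hkn (fun j t ht => (hY _).mgf_neg_sq_sub_le_exp hc _ ht)
    (fun j t ht => (hY _).mgf_neg_sq_sub_le_rpow hc _ ((by positivity : (0:ℝ) < _).trans ht))
    (HasDensityLE.ae_sum_sq_sub_pos (Z := fun j => Y (j * (M + 1))) (hY _) _ hn)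

theorem uniform_inverse_moment_bound_general
    (M : ℕ) (q c σmin C : ℝ) (hc : 0 < c) (hq : 2 < q) (hC : 1 ≤ C)
    (k : ℝ) (hk : 0 < k) (C₂ : ℝ) :
    ∃ β : ℝ,
      ∀ (Ω : Type) [MeasurableSpace Ω] (P : Measure Ω), IsProbabilityMeasure P →
        ∀ Y : ℕ → Ω → ℝ, MemD P M q c σmin C Y →
          ∀ p : ℕ, Nat.ceil (4 * k) * (M + 1) + 1 ≤ p →
            ∀ v : EuclideanSpace ℝ (Fin p), ‖v‖ ^ 2 ≤ C₂ * p →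
              ∫⁻ ω, ENNReal.ofReal
                  ((‖vecOf Y p ω - v‖ ^ 2 / ∫ ω', ‖vecOf Y p ω' - v‖ ^ 2 ∂P) ^ (-k)) ∂P
                ≤ ENNReal.ofReal β := by
  set T := (4 * c) ^ 2
  set a := (1 - exp (-1)) / 2 / T
  set ρ := √π / 4
  have ha : 0 < a := div_pos (by linarith [exp_lt_one_iff.2 (neg_one_lt_zero (R := ℝ))])
    (by positivity)
  obtain ⟨B, hB⟩ := exists_forall_rpow_mul_pow_le k (by positivity : 0 ≤ ρ)
    (by rw [div_lt_one four_pos, sqrt_lt' four_pos]; linarith [pi_lt_d2])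
  set A := 2 * (1 + C) + 2 * C₂
  refine ⟨(A * (M + 1)) ^ k * (a ^ (-k) + T ^ k * B / (k * Gamma k)), ?_⟩
  intro Ω _ P _ Y hY p hp v hv
  obtain ⟨n, hkn, hpn, hnp⟩ := Nat.exists_lt_and_forall_mul_succ_lt hp
  have hn : 0 < n := by omega
  have hp0 : (0 : ℝ) < p := by exact_mod_cast (by omega : 0 < p)
  have hA : 0 < A := by nlinarith [nonneg_of_mul_nonneg_left ((sq_nonneg _).trans hv) hp0]
  have hED : ∫ ω, ‖vecOf Y p ω - v‖ ^ 2 ∂P ≤ A * (M + 1) * n := by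
    have hpn' : (p : ℝ) ≤ n * (M + 1) := by exact_mod_cast hpn
    have := integral_norm_vecOf_sub_sq_le hY.measurable hq.le (by linarith) hY.mom_le p v
    nlinarith [mul_le_mul_of_nonneg_left hpn' hA.le]
  set w : ℕ → ℝ := fun i => if h : i < p then v ⟨i, h⟩ else 0
  set S : Ω → ℝ := fun ω => ∑ j ∈ Finset.range n, (Y (j * (M + 1)) ω - w (j * (M + 1))) ^ 2
  have hSpos : ∀ᵐ ω ∂P, 0 < S ω :=
    HasDensityLE.ae_sum_sq_sub_pos (Z := fun j => Y (j * (M + 1))) (hY.hasDensityLE _) _ hn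
  have hS := hY.mdep.lintegral_sum_sq_sub_rpow_neg_le hY.hasDensityLE hc w hk
    ((Nat.le_ceil _).trans_lt (by exact_mod_cast hkn))
  have hG := Gamma_pos_of_pos hk
  calc _ ≤ ENNReal.ofReal ((A * (M + 1) * n) ^ k) * ∫⁻ ω, ENNReal.ofReal (S ω ^ (-k)) ∂P :=
        lintegral_ofReal_div_rpow_neg_le
          (Finset.measurable_sum _ fun j _ => ((hY.measurable _).sub_const _).pow_const 2) hSpos
          (sum_sq_sub_le_norm_vecOf_sub_sq Y v (fun i => dif_pos i.2) hnp)
          (integral_nonneg fun _ => by positivity) hED hk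
    _ ≤ ENNReal.ofReal
          ((A * (M + 1) * n) ^ k * ((n * a) ^ (-k) + ρ ^ n * T ^ k / (k * Gamma k))) := by
        grw [hS, ENNReal.ofReal_mul (by positivity)]
    _ = ENNReal.ofReal
          ((A * (M + 1)) ^ k * (a ^ (-k) + T ^ k * (n ^ k * ρ ^ n) / (k * Gamma k))) := by
        rw [mul_rpow (by positivity) (by positivity), mul_rpow (by positivity) ha.le,
          rpow_neg (by positivity), rpow_neg ha.le]
        field_simp
    _ ≤ _ := by have := hB n; gcongr

/-- Uniform inverse-moment bound: there is a finite constant `β` depending only on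
`k, C₂` and the `D`-class parameters such that for all `(Y_i) ∈ D`, all
`p ≥ ⌈4k⌉(M+1) + 1` and all `v` with `‖v‖² ≤ C₂ p`,
`E[(‖Y - v‖²/E‖Y - v‖²)^{-k}] ≤ β`. -/
theorem uniform_inverse_moment_bound
    (M : ℕ) (q c σmin C : ℝ) (hc : 0 < c) (hσ : 0 < σmin) (hq : 2 < q) (hC : 1 ≤ C)
    (k : ℝ) (hk : 0 < k) (C₂ : ℝ) :
    ∃ β : ℝ,
      ∀ (Ω : Type) [MeasurableSpace Ω] (P : Measure Ω), IsProbabilityMeasure P →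
        ∀ Y : ℕ → Ω → ℝ, MemD P M q c σmin C Y →
          ∀ p : ℕ, Nat.ceil (4 * k) * (M + 1) + 1 ≤ p →
            ∀ v : EuclideanSpace ℝ (Fin p), ‖v‖ ^ 2 ≤ C₂ * p →
              ∫⁻ ω, ENNReal.ofReal
                  ((‖vecOf Y p ω - v‖ ^ 2 / ∫ ω', ‖vecOf Y p ω' - v‖ ^ 2 ∂P) ^ (-k)) ∂P
                ≤ ENNReal.ofReal β :=
  uniform_inverse_moment_bound_general M q c σmin C hc hq hC k hk C₂
end
end

section
/- Let q > 2, C₁ < ∞ and σ_min > 0, and let (Y_i)_{i∈ℕ} be a sequence of real random variables with sup_{i∈ℕ} E|Y_i|^q ≤ C₁ and inf_{i∈ℕ} Var(Y_i) ≥ σ_min². Then there exists B̄ > 0 depending only on q, C₁ and σ_min² such that for all B ≥ B̄ and all i ∈ ℕ: Var( sign(Y_i) · min(|Y_i|, B) ) ≥ σ_min² / 2. -/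
open MeasureTheory ProbabilityTheory Filter
open scoped ENNReal

noncomputable section

/-!
Write `Y⁽ᴮ⁾ = sign Y · min |Y| B`, the clamp of `Y` to `[-B, B]`. For `c ∈ [-B, B]`, replacing
`Y` by `Y⁽ᴮ⁾` changes `(Y - c)²` only where `|Y| > B`, and there `(Y - c)² ≤ 4Y² ≤ 4|Y|^q / B^(q-2)`.
With `c = E Y⁽ᴮ⁾` this gives `Var Y ≤ E (Y - c)² ≤ Var Y⁽ᴮ⁾ + 4 C₁ / B^(q-2)`, and the error
term falls below `σmin² / 2` once `B` is large, since `q > 2`.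
-/

lemma sign_mul_min_abs_eq_max_min {B : ℝ} (hB : 0 ≤ B) (x : ℝ) :
    Real.sign x * min |x| B = max (-B) (min x B) := by
  rcases lt_trichotomy x 0 with hx | rfl | hx
  · rw [Real.sign_of_neg hx, abs_of_neg hx]
    rcases le_total (-x) B with h | h
    · rw [min_eq_left h, min_eq_left (by linarith), max_eq_right (by linarith)]; ring
    · rw [min_eq_right h, min_eq_left (by linarith), max_eq_left (by linarith)]; ring
  · simp [hB]
  · rw [Real.sign_of_pos hx, abs_of_pos hx, one_mul, max_eq_right (by linarith [le_min hx.le hB])]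

lemma abs_max_neg_min_le {B : ℝ} (hB : 0 ≤ B) (x : ℝ) : |max (-B) (min x B)| ≤ B :=
  abs_le.2 ⟨le_max_left _ _, max_le (by linarith) (min_le_right _ _)⟩

lemma sq_le_rpow_div_rpow {y B q : ℝ} (hB : 0 < B) (hBy : B ≤ y) (hq : 2 ≤ q) :
    y ^ 2 ≤ y ^ q / B ^ (q - 2) := by
  have hy : 0 < y := hB.trans_le hBy
  rw [le_div_iff₀ (Real.rpow_pos_of_pos hB _)]
  calc y ^ 2 * B ^ (q - 2) ≤ y ^ 2 * y ^ (q - 2) := by gcongr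
    _ = y ^ q := by rw [← Real.rpow_natCast, ← Real.rpow_add hy]; norm_num

lemma sq_sub_le_sq_max_min_sub_add {B q c : ℝ} (hB : 0 < B) (hq : 2 ≤ q) (hc : |c| ≤ B)
    (x : ℝ) : (x - c) ^ 2 ≤ (max (-B) (min x B) - c) ^ 2 + 4 * (|x| ^ q / B ^ (q - 2)) := by
  have htail : 0 ≤ |x| ^ q / B ^ (q - 2) := by positivity
  rcases le_or_gt |x| B with hx | hx
  · obtain ⟨hxl, hxu⟩ := abs_le.1 hx
    rw [min_eq_left hxu, max_eq_right hxl]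
    linarith
  · have hxc : (x - c) ^ 2 ≤ 4 * |x| ^ 2 := by
      nlinarith [abs_sub x c, abs_nonneg (x - c), sq_abs (x - c), abs_nonneg c]
    nlinarith [sq_le_rpow_div_rpow hB hx.le hq, sq_nonneg (max (-B) (min x B) - c)]

section Truncation

variable {Ω : Type*} [MeasurableSpace Ω] {P : Measure Ω}

lemma variance_le_variance_max_min_add [IsProbabilityMeasure P] {f : Ω → ℝ}
    (hf : AEMeasurable f P) {B q : ℝ} (hB : 0 < B) (hq : 2 ≤ q)
    (hfq : Integrable (fun ω => |f ω| ^ q) P) :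
    variance f P ≤ variance (fun ω => max (-B) (min (f ω) B)) P
      + 4 * (∫ ω, |f ω| ^ q ∂P) / B ^ (q - 2) := by
  set g : Ω → ℝ := fun ω => max (-B) (min (f ω) B)
  have hg : AEMeasurable g P := by fun_prop
  set c := ∫ ω, g ω ∂P
  have hc : |c| ≤ B := by
    simpa using norm_integral_le_of_norm_le_const (μ := P) (f := g)
      (Eventually.of_forall fun ω => abs_max_neg_min_le hB.le (f ω))
  have hgc : Integrable (fun ω => (g ω - c) ^ 2) P := by
    refine Integrable.of_bound (by fun_prop) ((2 * B) ^ 2) (Eventually.of_forall fun ω => ?_)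
    have := abs_max_neg_min_le hB.le (f ω)
    rw [Real.norm_eq_abs, abs_pow]
    gcongr
    exact (abs_sub _ _).trans (by linarith)
  calc variance f P = variance (fun ω => f ω - c) P :=
        (variance_sub_const hf.aestronglyMeasurable c).symm
    _ ≤ ∫ ω, (f ω - c) ^ 2 ∂P := variance_le_expectation_sq (by fun_prop)
    _ ≤ ∫ ω, ((g ω - c) ^ 2 + 4 * (|f ω| ^ q / B ^ (q - 2))) ∂P :=
        integral_mono_of_nonneg (Eventually.of_forall fun ω => sq_nonneg _)
          (hgc.add ((hfq.div_const _).const_mul 4))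
          (Eventually.of_forall fun ω => sq_sub_le_sq_max_min_sub_add hB hq hc (f ω))
    _ = variance g P + 4 * (∫ ω, |f ω| ^ q ∂P) / B ^ (q - 2) := by
        rw [integral_add hgc ((hfq.div_const _).const_mul 4), integral_const_mul, integral_div,
          variance_eq_integral hg, mul_div_assoc]

lemma integrable_of_lintegral_ofReal_le {f : Ω → ℝ} (hf : AEStronglyMeasurable f P)
    (hf0 : 0 ≤ᵐ[P] f) {C : ℝ} (h : ∫⁻ ω, ENNReal.ofReal (f ω) ∂P ≤ ENNReal.ofReal C) :
    Integrable f P :=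
  ⟨hf, (hasFiniteIntegral_iff_ofReal hf0).2 (h.trans_lt ENNReal.ofReal_lt_top)⟩

lemma integral_le_of_lintegral_ofReal_le {f : Ω → ℝ} (hf : AEStronglyMeasurable f P)
    (hf0 : 0 ≤ᵐ[P] f) {C : ℝ} (hC : 0 ≤ C)
    (h : ∫⁻ ω, ENNReal.ofReal (f ω) ∂P ≤ ENNReal.ofReal C) : ∫ ω, f ω ∂P ≤ C := by
  rw [integral_eq_lintegral_of_nonneg_ae hf0 hf]
  exact ENNReal.toReal_le_of_le_ofReal hC h

end Truncation

lemma exists_pos_forall_div_rpow_le (K : ℝ) {p ε : ℝ} (hp : 0 < p) (hε : 0 < ε) :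
    ∃ Bbar : ℝ, 0 < Bbar ∧ ∀ B, Bbar ≤ B → K / B ^ p ≤ ε := by
  have hlim : Tendsto (fun B : ℝ => K * B ^ (-p)) atTop (nhds 0) := by
    simpa using (tendsto_rpow_neg_atTop hp).const_mul K
  obtain ⟨B₀, hB₀⟩ := eventually_atTop.1 (hlim.eventually (ge_mem_nhds hε))
  refine ⟨max B₀ 1, by positivity, fun B hB => ?_⟩
  have hBpos : 0 < B := by linarith [le_max_right B₀ 1]
  rw [div_eq_mul_inv, ← Real.rpow_neg hBpos.le]
  exact hB₀ B ((le_max_left _ _).trans hB)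

/-- Truncation preserves variance: there exists `B̄ > 0` depending only on `q, C₁, σmin²`
such that for every sequence with `E|Y_i|^q ≤ C₁` and `Var(Y_i) ≥ σmin²`, and every
`B ≥ B̄`, `Var(sign(Y_i)·min(|Y_i|, B)) ≥ σmin²/2`. -/
theorem truncated_variance_bound
    (q C₁ σmin : ℝ) (hq : 2 < q) (hσ : 0 < σmin) :
    ∃ Bbar : ℝ, 0 < Bbar ∧
      ∀ (Ω : Type) [MeasurableSpace Ω] (P : Measure Ω), IsProbabilityMeasure P →
        ∀ Y : ℕ → Ω → ℝ, (∀ i, Measurable (Y i)) →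
          (∀ i, ∫⁻ ω, ENNReal.ofReal (|Y i ω| ^ q) ∂P ≤ ENNReal.ofReal C₁) →
          (∀ i, σmin ^ 2 ≤ variance (Y i) P) →
          ∀ B : ℝ, Bbar ≤ B →
            ∀ i : ℕ,
              σmin ^ 2 / 2 ≤ variance (fun ω => Real.sign (Y i ω) * min |Y i ω| B) P := by
  obtain ⟨Bbar, hBbar, hsmall⟩ :=
    exists_pos_forall_div_rpow_le (4 * max C₁ 0) (sub_pos.2 hq) (half_pos (pow_pos hσ 2))
  refine ⟨Bbar, hBbar, fun Ω _ P _ Y hY hmom hvar B hB i => ?_⟩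
  have hBpos : 0 < B := hBbar.trans_le hB
  have hmeas : AEStronglyMeasurable (fun ω => |Y i ω| ^ q) P :=
    ((hY i).abs.pow_const q).aestronglyMeasurable
  have hnonneg : 0 ≤ᵐ[P] fun ω => |Y i ω| ^ q := Eventually.of_forall fun ω => by positivity
  have hmomC := (hmom i).trans (ENNReal.ofReal_le_ofReal (le_max_left C₁ 0))
  have hmom_le : ∫ ω, |Y i ω| ^ q ∂P ≤ max C₁ 0 :=
    integral_le_of_lintegral_ofReal_le hmeas hnonneg (le_max_right _ _) hmomC
  have htrunc := variance_le_variance_max_min_add (hY i).aemeasurable hBpos hq.le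
    (integrable_of_lintegral_ofReal_le hmeas hnonneg hmomC)
  have htail : 4 * (∫ ω, |Y i ω| ^ q ∂P) / B ^ (q - 2) ≤ 4 * max C₁ 0 / B ^ (q - 2) := by
    gcongr
  simp_rw [sign_mul_min_abs_eq_max_min hBpos.le]
  linarith [hvar i, hsmall B hB]
end
end

section
/- Let (Y_i)_{i∈ℕ} ∈ D(M, q, c, σ_min, C), let p ∈ ℕ, v ∈ ℝ^p, and set n := ⌊(p−1)/(M+1)⌋ + 1 and Y := (Y_1, …, Y_p). Then the random variables Y_{j(M+1)+1} for j = 0, …, n−1 are independent, and for every s ≥ 0, P( ‖Y − v‖² ≤ s ) ≤ (2c√s)^n. -/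
/-!
The coordinates `Y_{j(M+1)}` lie more than `M` apart, so `M`-dependence splits off the largest
one from all earlier ones, and induction makes the whole subfamily independent. On the event
`‖Y - v‖² ≤ s` each of these coordinates lies in an interval of length `2√s`, which has
probability at most `2c√s` because the density is bounded by `c`; independence multiplies
these `n` bounds.
-/

open MeasureTheory ProbabilityTheory Filter
open scoped ENNReal

noncomputable section

open Set
open scoped ENNReal

theorem MeasureTheory.Measure.le_mul_of_rnDeriv_le {α : Type*} [MeasurableSpace α]
    {μ ν : Measure α} [μ.HaveLebesgueDecomposition ν] [SFinite ν] (hμν : μ ≪ ν) {c : ℝ≥0∞}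
    (hc : ∀ᵐ x ∂ν, μ.rnDeriv ν x ≤ c) (s : Set α) : μ s ≤ c * ν s :=
  calc μ s = ∫⁻ x in s, μ.rnDeriv ν x ∂ν := (Measure.setLIntegral_rnDeriv hμν s).symm
    _ ≤ ∫⁻ _ in s, c ∂ν := lintegral_mono_ae (ae_restrict_of_ae hc)
    _ = c * ν s := setLIntegral_const s c

theorem measure_preimage_Icc_le_of_rnDeriv_le {Ω : Type*} [MeasurableSpace Ω] {P : Measure Ω}
    [IsFiniteMeasure P] {X : Ω → ℝ} (hX : Measurable X) {c : ℝ} (hc : 0 ≤ c)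
    (hac : P.map X ≪ volume) (hd : ∀ᵐ x, (P.map X).rnDeriv volume x ≤ ENNReal.ofReal c)
    (a r : ℝ) : P (X ⁻¹' Icc (a - r) (a + r)) ≤ ENNReal.ofReal (2 * c * r) :=
  calc P (X ⁻¹' Icc (a - r) (a + r)) ≤ P.map X (Icc (a - r) (a + r)) :=
        Measure.le_map_apply hX.aemeasurable _
    _ ≤ ENNReal.ofReal c * volume (Icc (a - r) (a + r)) := Measure.le_mul_of_rnDeriv_le hac hd _
    _ = ENNReal.ofReal (2 * c * r) := by
        rw [Real.volume_Icc, ← ENNReal.ofReal_mul hc]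
        ring_nf

theorem EuclideanSpace.apply_mem_Icc_of_norm_sub_sq_le {ι : Type*} [Fintype ι]
    {x v : EuclideanSpace ℝ ι} {s : ℝ} (h : ‖x - v‖ ^ 2 ≤ s) (i : ι) :
    x i ∈ Icc (v i - Real.sqrt s) (v i + Real.sqrt s) := by
  have hi : |x i - v i| ≤ Real.sqrt s :=
    calc |x i - v i| = ‖(x - v) i‖ := by rw [PiLp.sub_apply, Real.norm_eq_abs]
      _ ≤ ‖x - v‖ := PiLp.norm_apply_le _ i
      _ ≤ Real.sqrt s := Real.le_sqrt_of_sq_le h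
  constructor <;> linarith [abs_sub_le_iff.mp hi]

namespace MDependent

theorem iIndepFun_mul_succ {Ω : Type*} [MeasurableSpace Ω] {P : Measure Ω}
    [IsProbabilityMeasure P] {M : ℕ} {Y : ℕ → Ω → ℝ} (hY : MDependent P M Y) :
    iIndepFun (fun j : ℕ => Y (j * (M + 1))) P := by
  rw [iIndepFun_iff_measure_inter_preimage_eq_mul]
  intro S
  induction S using Finset.induction_on_max with
  | empty => simp
  | insert a s hlt ih =>
    intro sets hsets
    have ha : a ∉ s := fun h => (hlt a h).false
    rw [Finset.set_biInter_insert, Finset.prod_insert ha,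
      ← ih fun i hi => hsets i (Finset.mem_insert_of_mem hi), inter_comm, mul_comm (P _)]
    obtain rfl | ⟨b, hb⟩ := s.eq_empty_or_nonempty
    · simp
    obtain ⟨t, rfl⟩ : ∃ t, a = t + 1 :=
      Nat.exists_eq_add_one.mpr ((Nat.zero_le b).trans_lt (hlt b hb))
    refine (hY (t * (M + 1))).meas_inter ?_ ?_
    · refine Finset.measurableSet_biInter _ fun b hb => ?_
      have hbt : b * (M + 1) ≤ t * (M + 1) :=
        Nat.mul_le_mul_right _ (Nat.lt_succ_iff.mp (hlt b hb))
      exact (measurable_pi_apply (⟨b * (M + 1), hbt⟩ : {i : ℕ // i ≤ t * (M + 1)})).comp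
        (comap_measurable _) (hsets b (Finset.mem_insert_of_mem hb))
    · have hta : t * (M + 1) + M + 1 ≤ (t + 1) * (M + 1) := by ring_nf; omega
      exact (measurable_pi_apply
        (⟨(t + 1) * (M + 1), hta⟩ : {i : ℕ // t * (M + 1) + M + 1 ≤ i})).comp
        (comap_measurable _) (hsets _ (Finset.mem_insert_self _ s))

end MDependent

theorem independent_subfamily_small_ball_general
    {Ω : Type*} [MeasurableSpace Ω] (P : Measure Ω) [IsProbabilityMeasure P]
    (M : ℕ) (q c σmin C : ℝ) (hc : 0 < c)
    (Y : ℕ → Ω → ℝ) (hY : MemD P M q c σmin C Y)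
    (p : ℕ) (hp : 1 ≤ p) (v : EuclideanSpace ℝ (Fin p)) :
    iIndepFun
      (fun j : Fin ((p - 1) / (M + 1) + 1) => Y (j.1 * (M + 1))) P ∧
    ∀ s : ℝ, 0 ≤ s →
      P {ω | ‖vecOf Y p ω - v‖ ^ 2 ≤ s}
        ≤ ENNReal.ofReal ((2 * c * Real.sqrt s) ^ ((p - 1) / (M + 1) + 1)) := by
  set n := (p - 1) / (M + 1) + 1
  have hindep : iIndepFun (fun j : Fin n => Y (j.1 * (M + 1))) P :=
    hY.mdep.iIndepFun_mul_succ.precomp Fin.val_injective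
  refine ⟨hindep, fun s _ => ?_⟩
  have hlt (j : Fin n) : j.1 * (M + 1) < p := by
    have := (Nat.le_div_iff_mul_le M.add_one_pos).mp (Nat.lt_succ_iff.mp j.2)
    omega
  let ball (j : Fin n) : Set ℝ :=
    Icc (v ⟨_, hlt j⟩ - Real.sqrt s) (v ⟨_, hlt j⟩ + Real.sqrt s)
  have hsub :
      {ω | ‖vecOf Y p ω - v‖ ^ 2 ≤ s} ⊆ ⋂ j ∈ Finset.univ, Y (j.1 * (M + 1)) ⁻¹' ball j :=
    fun ω hω => mem_iInter₂.mpr fun j _ =>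
      EuclideanSpace.apply_mem_Icc_of_norm_sub_sq_le hω ⟨_, hlt j⟩
  calc P {ω | ‖vecOf Y p ω - v‖ ^ 2 ≤ s}
      ≤ ∏ j : Fin n, P (Y (j.1 * (M + 1)) ⁻¹' ball j) :=
        (measure_mono hsub).trans_eq (iIndepFun_iff_measure_inter_preimage_eq_mul.mp hindep _
          fun _ _ => measurableSet_Icc)
    _ ≤ ∏ _j : Fin n, ENNReal.ofReal (2 * c * Real.sqrt s) := Finset.prod_le_prod' fun j _ =>
        measure_preimage_Icc_le_of_rnDeriv_le (hY.measurable _) hc.le (hY.absCont _)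
          (hY.density_le _) _ _
    _ = ENNReal.ofReal ((2 * c * Real.sqrt s) ^ n) := by
        rw [Finset.prod_const, Finset.card_fin, ENNReal.ofReal_pow (by positivity)]

/-- Subfamily independence and small-ball bound: with `n = ⌊(p-1)/(M+1)⌋ + 1`, the
variables `Y_{j(M+1)}` (0-based; `j = 0, …, n-1`) are independent, and for every
`s ≥ 0`, `P(‖Y - v‖² ≤ s) ≤ (2c√s)^n`. -/
theorem independent_subfamily_small_ball
    {Ω : Type*} [MeasurableSpace Ω] (P : Measure Ω) [IsProbabilityMeasure P]
    (M : ℕ) (q c σmin C : ℝ) (hc : 0 < c) (hσ : 0 < σmin) (hq : 2 ≤ q) (hC : 1 ≤ C)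
    (Y : ℕ → Ω → ℝ) (hY : MemD P M q c σmin C Y)
    (p : ℕ) (hp : 1 ≤ p) (v : EuclideanSpace ℝ (Fin p)) :
    iIndepFun
      (fun j : Fin ((p - 1) / (M + 1) + 1) => Y (j.1 * (M + 1))) P ∧
    ∀ s : ℝ, 0 ≤ s →
      P {ω | ‖vecOf Y p ω - v‖ ^ 2 ≤ s}
        ≤ ENNReal.ofReal ((2 * c * Real.sqrt s) ^ ((p - 1) / (M + 1) + 1)) :=
  independent_subfamily_small_ball_general P M q c σmin C hc Y hY p hp v
end
end
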